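/- Let (β_k)_{k≥1} be real numbers and (a^{(m)})_{m≥0} a compatible family of 1-forms on the diamond hierarchical graphs, with Dirichlet magnetic operators D_m. Then for every m ≥ 1 the eigenvalue 1 of D_m has multiplicity exactly (1/3)(4^m + 2), i.e., dim ker(D_m − I) = (4^m + 2)/3. -/

import Mathlib

open Complex

abbrev DEdge (m : ℕ) : Type := Fin m → Fin 4

def DVtx : ℕ → Type
  | 0 => Bool
  | m + 1 => DVtx m ⊕ (DEdge m × Bool)

instance DVtx.instFintype : (m : ℕ) → Fintype (DVtx m)
  | 0 => inferInstanceAs (Fintype Bool)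
  | m + 1 =>
      letI := DVtx.instFintype m
      inferInstanceAs (Fintype (DVtx m ⊕ (DEdge m × Bool)))

instance DVtx.instDecidableEq : (m : ℕ) → DecidableEq (DVtx m)
  | 0 => inferInstanceAs (DecidableEq Bool)
  | m + 1 =>
      letI := DVtx.instDecidableEq m
      inferInstanceAs (DecidableEq (DVtx m ⊕ (DEdge m × Bool)))

/-- The inclusion of scale-`m` vertices into scale-`m+1` vertices. -/
def oldV {m : ℕ} (x : DVtx m) : DVtx (m + 1) := Sum.inl x

/-- The new vertices at scale `m+1`: each scale-`m` edge gives two new vertices. -/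
def newV {m : ℕ} (p : DEdge m × Bool) : DVtx (m + 1) := Sum.inr p

/-- Endpoints (source, target) of each canonically directed edge. Each edge `w` of `G_m`
with endpoints `x = src w`, `y = tgt w` is replaced in `G_{m+1}` by the 4-cycle
`x–u–y–v–x` with `u = (w,false)`, `v = (w,true)`, its four edges directed
`x→u`, `u→y`, `y→v`, `v→x`. -/
def dEnds : (m : ℕ) → DEdge m → DVtx m × DVtx m
  | 0, _ => (false, true)
  | m + 1, w =>
      let p : DEdge m := fun i => w i.castSucc
      let x := (dEnds m p).1
      let y := (dEnds m p).2
      if w (Fin.last m) = 0 then (oldV x, newV (p, false))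
      else if w (Fin.last m) = 1 then (newV (p, false), oldV y)
      else if w (Fin.last m) = 2 then (oldV y, newV (p, true))
      else (newV (p, true), oldV x)

def dsrc (m : ℕ) (e : DEdge m) : DVtx m := (dEnds m e).1
def dtgt (m : ℕ) (e : DEdge m) : DVtx m := (dEnds m e).2

/-- Degree of a vertex in `G_m`. -/
def ddeg (m : ℕ) (x : DVtx m) : ℕ :=
  (Finset.univ.filter fun e : DEdge m => dsrc m e = x).card +
  (Finset.univ.filter fun e : DEdge m => dtgt m e = x).card

/-- The magnetic operator `M^a_m` associated to a 1-form `a` (recorded on the canonical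
orientations of the edges; the reversed edge carries `-a e`). -/
noncomputable def magOp (m : ℕ) (a : DEdge m → ℝ) (f : DVtx m → ℂ) (x : DVtx m) : ℂ :=
  (ddeg m x : ℂ)⁻¹ *
    ((∑ e : DEdge m, if dsrc m e = x then f x - Complex.exp (Complex.I * a e) * f (dtgt m e) else 0) +
     (∑ e : DEdge m, if dtgt m e = x then f x - Complex.exp (-(Complex.I * a e)) * f (dsrc m e) else 0))

/-- The two original vertices `V_0` viewed inside `V_m`. -/
def base : (m : ℕ) → Bool → DVtx m
  | 0, b => b
  | m + 1, b => oldV (base m b)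

/-- Matrix of the magnetic operator `M^a_m`. -/
noncomputable def magMat (m : ℕ) (a : DEdge m → ℝ) : Matrix (DVtx m) (DVtx m) ℂ :=
  Matrix.of fun x y => magOp m a (fun v => if v = y then 1 else 0) x

/-- The Dirichlet magnetic operator: submatrix indexed by `V_m \ V_0`. -/
noncomputable def dirMat (m : ℕ) (a : DEdge m → ℝ) :
    Matrix {x : DVtx m // ∀ b, x ≠ base m b} {x : DVtx m // ∀ b, x ≠ base m b} ℂ :=
  (magMat m a).submatrix Subtype.val Subtype.val

/-- Flux of a 1-form around the scale-`(m+1)` cell replacing edge `w` of `G_m`. -/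
noncomputable def cellFlux {m : ℕ} (a : DEdge (m + 1) → ℝ) (w : DEdge m) : ℝ :=
  a (Fin.snoc w 0) + a (Fin.snoc w 1) + a (Fin.snoc w 2) + a (Fin.snoc w 3)

/-- The trace of a 1-form on `G_{m+1}` to `G_m`:
`a'(e_{xy}) = (1/2)(a(e_{xu}) + a(e_{uy}) + a(e_{xv}) + a(e_{vy}))`. -/
noncomputable def traceForm {m : ℕ} (a : DEdge (m + 1) → ℝ) : DEdge m → ℝ :=
  fun w => (1 / 2) * (a (Fin.snoc w 0) + a (Fin.snoc w 1) - a (Fin.snoc w 2) - a (Fin.snoc w 3))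

/-- A compatible family of 1-forms: flux `±4β_m` through every scale-`m` cell, and each
form traces to the previous one. -/
def Compatible (βs : ℕ → ℝ) (a : (m : ℕ) → DEdge m → ℝ) : Prop :=
  ∀ (k : ℕ) (w : DEdge k),
    (cellFlux (a (k + 1)) w = 4 * βs (k + 1) ∨ cellFlux (a (k + 1)) w = -(4 * βs (k + 1))) ∧
    traceForm (a (k + 1)) w = a k w

/-!
`G_{n+1}` is bipartite between the old vertices `V_n` and the new ones, so at an interior vertex
`D_{n+1} f = f` says that the magnetic neighbour sum of `f` (extended by `0` on `V_0`) vanishes.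
At the new vertex `u` of the cell of an edge `xy` this reads `c f(x) + d f(y) = 0` with unimodular
`c, d`; since `G_n` is connected and `f` vanishes on `V_0`, `f` vanishes on all of `V_n`. What
remains is a system `C g = 0` for the values `g` on the `2·4^n` new vertices, one equation per
interior old vertex. The same connectivity argument shows that `Cᴴ` is injective, so `C` has rank
`|V_n| - 2 = (2·4^n - 2)/3` and the kernel has dimension `2·4^n - (2·4^n - 2)/3 = (4^{n+1} + 2)/3`.
-/

section Combinatorics

variable {n : ℕ}

@[simp] lemma oldV_inj {x y : DVtx n} : (oldV x : DVtx (n + 1)) = oldV y ↔ x = y :=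
  Sum.inl_injective.eq_iff

lemma newV_injective : Function.Injective (newV : DEdge n × Bool → DVtx (n + 1)) :=
  Sum.inr_injective

@[simp] lemma newV_inj {p q : DEdge n × Bool} : (newV p : DVtx (n + 1)) = newV q ↔ p = q :=
  newV_injective.eq_iff

@[simp] lemma oldV_ne_newV (x : DVtx n) (p : DEdge n × Bool) : (oldV x : DVtx (n + 1)) ≠ newV p :=
  Sum.inl_ne_inr

@[simp] lemma newV_ne_oldV (x : DVtx n) (p : DEdge n × Bool) : (newV p : DVtx (n + 1)) ≠ oldV x :=
  Sum.inr_ne_inl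

lemma DVtx.succ_cases (v : DVtx (n + 1)) : (∃ x, v = oldV x) ∨ ∃ p, v = newV p := by
  rcases v with x | p
  exacts [.inl ⟨x, rfl⟩, .inr ⟨p, rfl⟩]

@[simp] lemma base_succ (b : Bool) : base (n + 1) b = oldV (base n b) := rfl

lemma base_injective (m : ℕ) : Function.Injective (base m) := by
  induction m with
  | zero => exact fun _ _ => id
  | succ n ih => exact fun _ _ h => ih (oldV_inj.1 h)

@[simp] lemma dsrc_snoc_zero (w : DEdge n) : dsrc (n + 1) (Fin.snoc w 0) = oldV (dsrc n w) := by
  simp [dsrc, dEnds]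

@[simp] lemma dtgt_snoc_zero (w : DEdge n) : dtgt (n + 1) (Fin.snoc w 0) = newV (w, false) := by
  simp [dtgt, dEnds]

@[simp] lemma dsrc_snoc_one (w : DEdge n) : dsrc (n + 1) (Fin.snoc w 1) = newV (w, false) := by
  simp [dsrc, dEnds]

@[simp] lemma dtgt_snoc_one (w : DEdge n) : dtgt (n + 1) (Fin.snoc w 1) = oldV (dtgt n w) := by
  simp [dtgt, dEnds]

@[simp] lemma dsrc_snoc_two (w : DEdge n) : dsrc (n + 1) (Fin.snoc w 2) = oldV (dtgt n w) := by
  simp [dsrc, dtgt, dEnds]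

@[simp] lemma dtgt_snoc_two (w : DEdge n) : dtgt (n + 1) (Fin.snoc w 2) = newV (w, true) := by
  simp [dtgt, dEnds]

@[simp] lemma dsrc_snoc_three (w : DEdge n) : dsrc (n + 1) (Fin.snoc w 3) = newV (w, true) := by
  simp [dsrc, dEnds]

@[simp] lemma dtgt_snoc_three (w : DEdge n) : dtgt (n + 1) (Fin.snoc w 3) = oldV (dsrc n w) := by
  simp [dsrc, dtgt, dEnds]

lemma sum_dEdge_succ {M : Type*} [AddCommMonoid M] (F : DEdge (n + 1) → M) :
    ∑ e, F e = ∑ w : DEdge n, ∑ j : Fin 4, F (Fin.snoc w j) := by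
  rw [← (Fin.snocEquiv fun _ => Fin 4).sum_comp, Fintype.sum_prod_type, Finset.sum_comm]
  rfl

lemma DVtx.forall_of_edge_iff {m : ℕ} (P : DVtx m → Prop) (hbase : ∀ b, P (base m b))
    (hedge : ∀ e, P (dsrc m e) ↔ P (dtgt m e)) : ∀ x, P x := by
  induction m with
  | zero => exact fun b => hbase b
  | succ n ih =>
    have hu (w : DEdge n) : P (oldV (dsrc n w)) ↔ P (newV (w, false)) := by
      simpa using hedge (Fin.snoc w 0)
    have hold : ∀ x, P (oldV x) :=
      ih _ hbase fun w => (hu w).trans (by simpa using hedge (Fin.snoc w 1))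
    intro v
    rcases DVtx.succ_cases v with ⟨x, rfl⟩ | ⟨⟨w, _ | _⟩, rfl⟩
    · exact hold x
    · exact (hu w).1 (hold _)
    · simpa [hold] using hedge (Fin.snoc w 2)

lemma DVtx.exists_edge {m : ℕ} (x : DVtx m) : ∃ e, dsrc m e = x ∨ dtgt m e = x := by
  induction m with
  | zero =>
    cases x
    exacts [⟨0, .inl rfl⟩, ⟨0, .inr rfl⟩]
  | succ n ih =>
    rcases DVtx.succ_cases x with ⟨x, rfl⟩ | ⟨⟨w, _ | _⟩, rfl⟩
    · obtain ⟨e, rfl | rfl⟩ := ih x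
      exacts [⟨Fin.snoc e 0, by simp⟩, ⟨Fin.snoc e 1, by simp⟩]
    · exact ⟨Fin.snoc w 0, by simp⟩
    · exact ⟨Fin.snoc w 2, by simp⟩

lemma ddeg_pos {m : ℕ} (x : DVtx m) : 0 < ddeg m x := by
  obtain ⟨e, he | he⟩ := DVtx.exists_edge x
  · exact Nat.add_pos_left (Finset.card_pos.2 ⟨e, by simpa using he⟩) _
  · exact Nat.add_pos_right _ (Finset.card_pos.2 ⟨e, by simpa using he⟩)

lemma three_mul_card_DVtx (m : ℕ) : 3 * Fintype.card (DVtx m) = 2 * 4 ^ m + 4 := by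
  induction m with
  | zero => rfl
  | succ n ih =>
    have : Fintype.card (DVtx (n + 1)) = Fintype.card (DVtx n) + 4 ^ n * 2 := by
      change Fintype.card (DVtx n ⊕ (DEdge n × Bool)) = _
      simp [Fintype.card_sum, Fintype.card_prod]
    rw [this, pow_succ]
    omega

abbrev Interior (m : ℕ) : Type := {x : DVtx m // ∀ b, x ≠ base m b}

lemma card_interior_add_two (m : ℕ) : Fintype.card (Interior m) + 2 = Fintype.card (DVtx m) := by
  have hrange : Fintype.card {x // x ∈ Set.range (base m)} = 2 := by
    convert Set.card_range_of_injective (base_injective m)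
    rfl
  have hle := Fintype.card_subtype_le (· ∈ Set.range (base m))
  rw [Fintype.card_congr (Equiv.subtypeEquivRight (q := (· ∉ Set.range (base m)))
    fun x => by simp), Fintype.card_subtype_compl]
  omega

end Combinatorics

lemma Function.Injective.sum_mul_extend {ι κ R : Type*} [Fintype ι] [Fintype κ]
    [NonUnitalNonAssocSemiring R] {e : ι → κ} (he : Function.Injective e) (g : κ → R)
    (f : ι → R) : ∑ k, g k * Function.extend e f 0 k = ∑ i, g (e i) * f i := by
  classical
  rw [← Finset.sum_subset (Finset.subset_univ (Finset.univ.map ⟨e, he⟩)), Finset.sum_map]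
  · simp [he.extend_apply]
  · intro k _ hk
    rw [Function.extend_apply' _ _ _ fun ⟨i, hi⟩ => hk (by simp [← hi]), Pi.zero_apply, mul_zero]

open Matrix

lemma Matrix.submatrix_mulVec_of_injective {l m o n R : Type*} [Fintype o] [Fintype n]
    [NonUnitalNonAssocSemiring R] (M : Matrix m n R) (e₁ : l → m) {e₂ : o → n}
    (he₂ : Function.Injective e₂) (f : o → R) :
    M.submatrix e₁ e₂ *ᵥ f = fun i => (M *ᵥ Function.extend e₂ f 0) (e₁ i) := by
  ext i
  simp only [mulVec, dotProduct, he₂.sum_mul_extend, submatrix_apply]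

section Magnetic

variable {m : ℕ} (a : DEdge m → ℝ)

noncomputable def magAdj (g : DVtx m → ℂ) (x : DVtx m) : ℂ :=
  ∑ e, ((if dsrc m e = x then exp (I * a e) * g (dtgt m e) else 0) +
    (if dtgt m e = x then exp (-(I * a e)) * g (dsrc m e) else 0))

noncomputable def magAdjLin : (DVtx m → ℂ) →ₗ[ℂ] DVtx m → ℂ where
  toFun := magAdj a
  map_add' f g := by
    ext x
    simp only [magAdj, Pi.add_apply, ← Finset.sum_add_distrib]
    congr! 1 with e
    split_ifs <;> ring
  map_smul' c f := by
    ext x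
    simp only [magAdj, Pi.smul_apply, smul_eq_mul, Finset.mul_sum, RingHom.id_apply]
    congr! 1 with e
    split_ifs <;> ring

lemma magOp_eq_sub (g : DVtx m → ℂ) (x : DVtx m) :
    magOp m a g x = g x - (ddeg m x : ℂ)⁻¹ * magAdj a g x := by
  have hdeg : (ddeg m x : ℂ) ≠ 0 := Nat.cast_ne_zero.2 (ddeg_pos x).ne'
  have hsplit (p : Prop) [Decidable p] (u v : ℂ) :
      (if p then u - v else 0) = (if p then u else 0) - if p then v else 0 := by
    split_ifs <;> simp
  have hcard : ((Finset.univ.filter (dsrc m · = x)).card : ℂ) +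
      (Finset.univ.filter (dtgt m · = x)).card = ddeg m x := by
    push_cast [ddeg]; rfl
  simp only [magOp, magAdj, hsplit, Finset.sum_sub_distrib, Finset.sum_add_distrib,
    ← Finset.sum_filter, Finset.sum_const, nsmul_eq_mul]
  rw [← hcard] at hdeg ⊢
  field_simp
  ring

lemma magMat_eq : magMat m a =
    1 - diagonal (fun x => (ddeg m x : ℂ)⁻¹) * LinearMap.toMatrix' (magAdjLin a) := by
  ext x y
  have : (fun v => if v = y then (1 : ℂ) else 0) = Pi.single y 1 := funext fun v => by
    rw [Pi.single_apply]
  simp only [magMat, of_apply, magOp_eq_sub, this]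
  simp [one_apply, magAdjLin]

noncomputable abbrev oneEigenspace (m : ℕ) (a : DEdge m → ℝ) : Submodule ℂ (Interior m → ℂ) :=
  LinearMap.ker (toLin' (dirMat m a - (1 : ℂ) • 1))

lemma mem_oneEigenspace_iff (f : Interior m → ℂ) :
    f ∈ oneEigenspace m a ↔ ∀ x : Interior m, magAdj a (Function.extend Subtype.val f 0) x = 0 := by
  have hsub : dirMat m a - (1 : ℂ) • 1 = -(diagonal (fun x => (ddeg m x : ℂ)⁻¹) *
      LinearMap.toMatrix' (magAdjLin a)).submatrix Subtype.val Subtype.val := by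
    rw [dirMat, magMat_eq, one_smul, ← submatrix_one_embedding (Function.Embedding.subtype _)]
    simp [submatrix_sub]
  have hA (g : DVtx m → ℂ) : LinearMap.toMatrix' (magAdjLin a) *ᵥ g = magAdj a g := by
    rw [← toLin'_apply, toLin'_toMatrix']
    rfl
  rw [LinearMap.mem_ker, hsub, toLin'_apply, neg_mulVec, neg_eq_zero,
    submatrix_mulVec_of_injective _ _ Subtype.val_injective, ← mulVec_mulVec, hA, funext_iff]
  simp [mulVec_diagonal, (ddeg_pos _).ne']

lemma extend_val_base (f : Interior m → ℂ) (b : Bool) :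
    Function.extend Subtype.val f 0 (base m b) = 0 :=
  Function.extend_val_apply' fun h => h b rfl

end Magnetic

lemma eq_zero_of_edge_relation {n : ℕ} (g : DVtx n → ℂ) (c d : DEdge n → ℂ)
    (hc : ∀ w, c w ≠ 0) (hd : ∀ w, d w ≠ 0) (hbase : ∀ b, g (base n b) = 0)
    (hedge : ∀ w, c w * g (dsrc n w) + d w * g (dtgt n w) = 0) : g = 0 := by
  refine funext <| DVtx.forall_of_edge_iff (g · = 0) hbase fun w => ?_
  have h := hedge w
  constructor <;> intro h0
  · rw [h0, mul_zero, zero_add] at h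
    exact (mul_eq_zero.1 h).resolve_left (hd w)
  · rw [h0, mul_zero, add_zero] at h
    exact (mul_eq_zero.1 h).resolve_left (hc w)

section Refinement

variable {n : ℕ} (α : DEdge (n + 1) → ℝ)

/-- `srcPhase α p` (resp. `tgtPhase α p`) is the phase with which the new vertex `p` enters the
neighbour sum at the source (resp. target) of its parent edge `p.1`. -/
noncomputable def srcPhase (p : DEdge n × Bool) : ℂ :=
  if p.2 then exp (-(I * α (Fin.snoc p.1 3))) else exp (I * α (Fin.snoc p.1 0))

noncomputable def tgtPhase (p : DEdge n × Bool) : ℂ :=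
  if p.2 then exp (I * α (Fin.snoc p.1 2)) else exp (-(I * α (Fin.snoc p.1 1)))

lemma srcPhase_ne_zero (p : DEdge n × Bool) : srcPhase α p ≠ 0 := by
  unfold srcPhase; split_ifs <;> exact exp_ne_zero _

lemma tgtPhase_ne_zero (p : DEdge n × Bool) : tgtPhase α p ≠ 0 := by
  unfold tgtPhase; split_ifs <;> exact exp_ne_zero _

noncomputable def cellCoeff : Matrix (DVtx n) (DEdge n × Bool) ℂ :=
  of fun x p => (if dsrc n p.1 = x then srcPhase α p else 0) +
    if dtgt n p.1 = x then tgtPhase α p else 0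

noncomputable def cellMat : Matrix (Interior n) (DEdge n × Bool) ℂ :=
  (cellCoeff α).submatrix Subtype.val id

lemma magAdj_oldV (g : DVtx (n + 1) → ℂ) (x : DVtx n) :
    magAdj α g (oldV x) = ∑ p, cellCoeff α x p * g (newV p) := by
  simp only [magAdj, sum_dEdge_succ, Fin.sum_univ_four, Fintype.sum_prod_type, Fintype.sum_bool]
  refine Finset.sum_congr rfl fun w _ => ?_
  simp only [dsrc_snoc_zero, dtgt_snoc_zero, dsrc_snoc_one, dtgt_snoc_one, dsrc_snoc_two,
    dtgt_snoc_two, dsrc_snoc_three, dtgt_snoc_three, oldV_inj, newV_ne_oldV, add_zero,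
    zero_add, cellCoeff, srcPhase, tgtPhase, of_apply, Bool.false_eq_true, ↓reduceIte]
  split_ifs <;> ring

lemma magAdj_newV (g : DVtx (n + 1) → ℂ) (p : DEdge n × Bool) :
    magAdj α g (newV p) = star (srcPhase α p) * g (oldV (dsrc n p.1)) +
      star (tgtPhase α p) * g (oldV (dtgt n p.1)) := by
  obtain ⟨w, b⟩ := p
  simp only [magAdj, sum_dEdge_succ, Fin.sum_univ_four]
  rw [Finset.sum_eq_single w]
  · cases b
    · simp [srcPhase, tgtPhase, ← exp_conj]
    · simp [srcPhase, tgtPhase, ← exp_conj, add_comm]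
  · intro w' _ hw
    simp [hw]
  · simp

lemma sum_star_cellCoeff_mul (g : DVtx n → ℂ) (p : DEdge n × Bool) :
    ∑ x, star (cellCoeff α x p) * g x =
      star (srcPhase α p) * g (dsrc n p.1) + star (tgtPhase α p) * g (dtgt n p.1) := by
  simp [cellCoeff, apply_ite star, add_mul, ite_mul, Finset.sum_add_distrib]

lemma cellMat_conjTranspose_mulVec_injective : Function.Injective (cellMat α)ᴴ.mulVecLin := by
  refine (injective_iff_map_eq_zero _).2 fun c hc => ?_
  let g := Function.extend Subtype.val c 0
  have hg : g = 0 := by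
    refine eq_zero_of_edge_relation g (fun w => star (srcPhase α (w, false)))
      (fun w => star (tgtPhase α (w, false))) (by simp [srcPhase_ne_zero])
      (by simp [tgtPhase_ne_zero]) (extend_val_base c) fun w => ?_
    rw [← sum_star_cellCoeff_mul, Subtype.val_injective.sum_mul_extend]
    exact congrFun hc (w, false)
  funext x
  simpa [g, Subtype.val_injective.extend_apply] using congrFun hg x.1

open scoped ComplexOrder in
lemma finrank_ker_cellMat_add_card :
    Module.finrank ℂ (LinearMap.ker (cellMat α).mulVecLin) + Fintype.card (Interior n) =
      2 * 4 ^ n := by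
  have hrank : (cellMat α).rank = Fintype.card (Interior n) := by
    rw [← rank_conjTranspose, rank,
      LinearMap.finrank_range_of_inj (cellMat_conjTranspose_mulVec_injective α),
      Module.finrank_fintype_fun_eq_card]
  have := (cellMat α).mulVecLin.finrank_range_add_finrank_ker
  rw [← rank, hrank, Module.finrank_fintype_fun_eq_card] at this
  simp only [Fintype.card_prod, Fintype.card_fun, Fintype.card_fin, Fintype.card_bool] at this
  omega

lemma newV_ne_base (p : DEdge n × Bool) (b : Bool) : newV p ≠ base (n + 1) b := by
  simp

lemma extend_val_newV (f : Interior (n + 1) → ℂ) (p : DEdge n × Bool) :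
    Function.extend Subtype.val f 0 (newV p) = f ⟨newV p, newV_ne_base p⟩ :=
  Subtype.val_injective.extend_apply f 0 ⟨newV p, _⟩

lemma extend_newV_oldV (h : DEdge n × Bool → ℂ) (x : DVtx n) :
    Function.extend newV h 0 (oldV x) = 0 :=
  Function.extend_apply' _ _ _ fun ⟨p, hp⟩ => newV_ne_oldV x p hp

variable {α}

lemma extend_val_oldV_eq_zero {f : Interior (n + 1) → ℂ} (hf : f ∈ oneEigenspace (n + 1) α)
    (x : DVtx n) : Function.extend Subtype.val f 0 (oldV x) = 0 := by
  have hker := (mem_oneEigenspace_iff α f).1 hf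
  have := eq_zero_of_edge_relation (fun x => Function.extend Subtype.val f 0 (oldV x))
    (fun w => star (srcPhase α (w, false))) (fun w => star (tgtPhase α (w, false)))
    (by simp [srcPhase_ne_zero]) (by simp [tgtPhase_ne_zero]) (extend_val_base f)
    fun w => by simpa [magAdj_newV] using hker ⟨newV (w, false), newV_ne_base _⟩
  exact congrFun this x

lemma cellMat_mulVec_restrict {f : Interior (n + 1) → ℂ} (hf : f ∈ oneEigenspace (n + 1) α) :
    cellMat α *ᵥ (fun p => f ⟨newV p, newV_ne_base p⟩) = 0 := by
  funext x
  have := (mem_oneEigenspace_iff α f).1 hf ⟨oldV x.1, by simpa using x.2⟩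
  rw [magAdj_oldV] at this
  simp only [extend_val_newV] at this
  simpa [mulVec, dotProduct, cellMat] using this

lemma extend_newV_mem_oneEigenspace {h : DEdge n × Bool → ℂ} (hh : cellMat α *ᵥ h = 0) :
    (fun x : Interior (n + 1) => Function.extend newV h 0 x.1) ∈ oneEigenspace (n + 1) α := by
  have hext : Function.extend Subtype.val
      (fun x : Interior (n + 1) => Function.extend newV h 0 x.1) 0 = Function.extend newV h 0 := by
    funext v
    by_cases hv : ∀ b, v ≠ base (n + 1) b
    · exact Function.extend_val_apply hv
    · push Not at hv
      obtain ⟨b, rfl⟩ := hv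
      rw [extend_val_base, base_succ, extend_newV_oldV]
  rw [mem_oneEigenspace_iff, hext]
  rintro ⟨v, hv⟩
  rcases DVtx.succ_cases v with ⟨x, rfl⟩ | ⟨p, rfl⟩
  · have := congrFun hh ⟨x, by simpa using hv⟩
    simpa [magAdj_oldV, newV_injective.extend_apply, mulVec, dotProduct, cellMat] using this
  · simp [magAdj_newV]

variable (α) in
noncomputable def oneEigenspaceEquivKerCellMat :
    oneEigenspace (n + 1) α ≃ₗ[ℂ] LinearMap.ker (cellMat α).mulVecLin where
  toFun f := ⟨fun p => f.1 ⟨newV p, newV_ne_base p⟩, cellMat_mulVec_restrict f.2⟩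
  invFun h := ⟨fun x => Function.extend newV h.1 0 x.1, extend_newV_mem_oneEigenspace h.2⟩
  map_add' _ _ := rfl
  map_smul' _ _ := rfl
  left_inv f := by
    ext ⟨v, hv⟩
    rcases DVtx.succ_cases v with ⟨x, rfl⟩ | ⟨p, rfl⟩
    · have := extend_val_oldV_eq_zero f.2 x
      rw [Function.extend_val_apply hv] at this
      exact (extend_newV_oldV _ x).trans this.symm
    · simp [newV_injective.extend_apply]
  right_inv h := by
    ext p
    simp [newV_injective.extend_apply]

end Refinement

theorem stmt8 (a : (m : ℕ) → DEdge m → ℝ)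
    (m : ℕ) (hm : 1 ≤ m) :
    3 * Module.finrank ℂ
        (LinearMap.ker (Matrix.toLin' (dirMat m (a m) - (1 : ℂ) • 1))) =
      4 ^ m + 2 := by
  obtain ⟨n, rfl⟩ := Nat.exists_eq_add_of_le' hm
  have hker := finrank_ker_cellMat_add_card (a (n + 1))
  have hint := card_interior_add_two n
  have hV := three_mul_card_DVtx n
  rw [(oneEigenspaceEquivKerCellMat (a (n + 1))).finrank_eq, pow_succ]
  omega
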